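/- arXiv:1610.07172 — 3 statements merged into one kernel-verified Lean document; each statement's English description precedes it below -/
import Mathlib

section
/- Let Ω be a measurable set and u, v : Ω → [0, ∞) be measurable functions with u, v ∈ L¹(Ω) and ∫_Ω u log(u/v) - (u - v) dx well-defined. Then ∫_Ω u log(u/v) - (u - v) dx ≥ (3 / (2‖u‖_{L¹(Ω)} + 4‖v‖_{L¹(Ω)})) · ‖u - v‖²_{L¹(Ω)}. -/
/-!
Writing `t = u / v`, the integrand is `v · klFun t` with `klFun t = t log t + 1 - t`, and the
one-variable inequality `3 (t - 1)² ≤ (2t + 4) klFun t` (the difference vanishes at `t = 1` and has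
derivative `4 ((t + 1) log t - 2 (t - 1))`, whose sign is that of `t - 1`) gives pointwise
`3 (u - v)² ≤ (2u + 4v) (u log (u / v) - (u - v))`. Integrating, the Cauchy–Schwarz inequality
`(∫ f)² ≤ (∫ g) (∫ h)` for `f² ≤ g h` yields the claim.
-/

open MeasureTheory Real Set InformationTheory

lemma monotoneOn_add_one_mul_log_sub :
    MonotoneOn (fun x => (x + 1) * log x - 2 * (x - 1)) (Ioi 0) := by
  have hderiv : ∀ x ∈ Ioi (0 : ℝ),
      HasDerivAt (fun x => (x + 1) * log x - 2 * (x - 1)) (log x + x⁻¹ - 1) x := by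
    intro x hx
    have hx0 : x ≠ 0 := ne_of_gt hx
    refine ((((hasDerivAt_id' x).add_const 1).mul (hasDerivAt_log hx0)).sub
      (((hasDerivAt_id' x).sub_const 1).const_mul 2)).congr_deriv ?_
    field_simp
    ring
  refine monotoneOn_of_deriv_nonneg (convex_Ioi 0)
    (fun x hx => (hderiv x hx).continuousAt.continuousWithinAt)
    (fun x hx => (hderiv x (interior_subset hx)).differentiableAt.differentiableWithinAt)
    fun x hx => ?_
  rw [interior_Ioi] at hx
  rw [(hderiv x hx).deriv]
  linarith [one_sub_inv_le_log_of_pos (mem_Ioi.mp hx)]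

lemma three_mul_sub_one_sq_le_mul_klFun {t : ℝ} (ht : 0 ≤ t) :
    3 * (t - 1) ^ 2 ≤ (2 * t + 4) * klFun t := by
  rcases ht.eq_or_lt with rfl | ht
  · norm_num [klFun_zero]
  set φ : ℝ → ℝ := fun x => (2 * x + 4) * klFun x - 3 * (x - 1) ^ 2
  have hderiv : ∀ x ∈ Ioi (0 : ℝ), HasDerivAt φ (4 * ((x + 1) * log x - 2 * (x - 1))) x := by
    intro x hx
    refine ((((hasDerivAt_id' x).const_mul 2).add_const 4).mul (hasDerivAt_klFun (ne_of_gt hx))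
      |>.sub (((hasDerivAt_id' x).sub_const 1).pow 2 |>.const_mul 3)).congr_deriv ?_
    rw [klFun_apply]
    ring
  have h1 : (1 : ℝ) ∈ Ioi 0 := mem_Ioi.mpr one_pos
  have hIoi_one : Ioi (1 : ℝ) ⊆ Ioi 0 := Ioi_subset_Ioi zero_le_one
  have hmin : IsMinOn φ (Ioi 0) 1 := by
    refine isMinOn_Ioi_of_deriv (hderiv 1 h1).continuousAt
      (fun x hx => (hderiv x hx.1).differentiableAt.differentiableWithinAt)
      (fun x hx => (hderiv x (hIoi_one hx)).differentiableAt.differentiableWithinAt)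
      (fun x hx => ?_) (fun x hx => ?_)
    · rw [(hderiv x hx.1).deriv]
      have := monotoneOn_add_one_mul_log_sub hx.1 h1 hx.2.le
      norm_num at this
      linarith
    · have hx0 := hIoi_one hx
      rw [(hderiv x hx0).deriv]
      have := monotoneOn_add_one_mul_log_sub h1 hx0 hx.le
      norm_num at this
      linarith
  have := hmin (mem_Ioi.mpr ht)
  simp only [mem_ofPred_eq, φ, klFun_one] at this
  linarith

lemma mul_log_div_sub_sub_eq_mul_klFun (a : ℝ) {b : ℝ} (hb : 0 < b) :
    a * log (a / b) - (a - b) = b * klFun (a / b) := by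
  rw [klFun_apply]
  field_simp
  ring

lemma sq_integral_le_integral_mul_integral {α : Type*} [MeasurableSpace α] {μ : Measure α}
    {f g h : α → ℝ} (hf : Integrable f μ) (hg : Integrable g μ) (hh : Integrable h μ)
    (hg0 : ∀ᵐ x ∂μ, 0 ≤ g x) (hh0 : ∀ᵐ x ∂μ, 0 ≤ h x) (hfgh : ∀ᵐ x ∂μ, f x ^ 2 ≤ g x * h x) :
    (∫ x, f x ∂μ) ^ 2 ≤ (∫ x, g x ∂μ) * ∫ x, h x ∂μ := by
  have hquad (s : ℝ) :
      0 ≤ (∫ x, g x ∂μ) * (s * s) + (-2 * ∫ x, f x ∂μ) * s + ∫ x, h x ∂μ := by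
    have hpt : ∀ᵐ x ∂μ, 0 ≤ g x * (s * s) + (-2 * f x) * s + h x := by
      filter_upwards [hg0, hh0, hfgh] with x hgx hhx hx
      rcases hgx.eq_or_lt with hgx | hgx
      · rw [← hgx, zero_mul] at hx
        rw [← hgx, pow_eq_zero_iff two_ne_zero |>.mp (le_antisymm hx (sq_nonneg _))]
        simpa using hhx
      · -- `g (g s² - 2 f s + h) = (g s - f)² + (g h - f²)`
        refine (mul_nonneg_iff_of_pos_left hgx).mp ?_
        nlinarith [sq_nonneg (g x * s - f x)]
    have hgf : Integrable (fun x => g x * (s * s) + -2 * f x * s) μ :=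
      (hg.mul_const _).add ((hf.const_mul _).mul_const _)
    have := integral_nonneg_of_ae hpt
    rwa [integral_add hgf hh, integral_add (hg.mul_const _) ((hf.const_mul _).mul_const _),
      integral_mul_const, integral_mul_const, integral_const_mul] at this
  have := discrim_le_zero hquad
  rw [discrim] at this
  linarith

lemma mul_log_div_sub_sub_nonneg {a b : ℝ} (ha : 0 ≤ a) (hb : 0 ≤ b) (hab : 0 < a → 0 < b) :
    0 ≤ a * log (a / b) - (a - b) := by
  rcases hb.eq_or_lt with rfl | hb
  · obtain rfl : a = 0 := le_antisymm (not_lt.mp fun h => lt_irrefl 0 (hab h)) ha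
    simp
  · rw [mul_log_div_sub_sub_eq_mul_klFun a hb]
    exact mul_nonneg hb.le (klFun_nonneg (div_nonneg ha hb.le))

lemma three_mul_sub_sq_le_mul_log_div_sub_sub {a b : ℝ} (ha : 0 ≤ a) (hb : 0 ≤ b)
    (hab : 0 < a → 0 < b) :
    3 * (a - b) ^ 2 ≤ (2 * a + 4 * b) * (a * log (a / b) - (a - b)) := by
  rcases hb.eq_or_lt with rfl | hb
  · obtain rfl : a = 0 := le_antisymm (not_lt.mp fun h => lt_irrefl 0 (hab h)) ha
    simp
  rw [mul_log_div_sub_sub_eq_mul_klFun a hb]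
  calc 3 * (a - b) ^ 2 = b ^ 2 * (3 * (a / b - 1) ^ 2) := by field_simp
    _ ≤ b ^ 2 * ((2 * (a / b) + 4) * klFun (a / b)) :=
      mul_le_mul_of_nonneg_left (three_mul_sub_one_sq_le_mul_klFun (div_nonneg ha hb.le))
        (sq_nonneg b)
    _ = (2 * a + 4 * b) * (b * klFun (a / b)) := by field_simp

/-- Csiszár–Kullback–Pinsker inequality in the form of Lemma 3.1. The hypothesis
`hpos` (v > 0 a.e. where u > 0) together with integrability of the entropy integrand
encodes that ∫ u log(u/v) - (u - v) is well defined (not +∞). -/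
theorem stmt_6 {α : Type*} [MeasurableSpace α] (μ : Measure α)
    (u v : α → ℝ) (hu0 : ∀ x, 0 ≤ u x) (hv0 : ∀ x, 0 ≤ v x)
    (hu : Integrable u μ) (hv : Integrable v μ)
    (hpos : ∀ᵐ x ∂μ, 0 < u x → 0 < v x)
    (hint : Integrable (fun x => u x * Real.log (u x / v x) - (u x - v x)) μ) :
    (∫ x, (u x * Real.log (u x / v x) - (u x - v x)) ∂μ) ≥
      3 / (2 * (∫ x, u x ∂μ) + 4 * (∫ x, v x ∂μ)) * (∫ x, |u x - v x| ∂μ) ^ 2 := by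
  have hu_int : 0 ≤ ∫ x, u x ∂μ := integral_nonneg hu0
  have hv_int : 0 ≤ ∫ x, v x ∂μ := integral_nonneg hv0
  have hE0 : ∀ᵐ x ∂μ, 0 ≤ u x * log (u x / v x) - (u x - v x) :=
    hpos.mono fun x => mul_log_div_sub_sub_nonneg (hu0 x) (hv0 x)
  have hw : Integrable (fun x => (2 * u x + 4 * v x) / 3) μ :=
    ((hu.const_mul 2).add (hv.const_mul 4)).div_const 3
  have hw_int :
      ∫ x, (2 * u x + 4 * v x) / 3 ∂μ = (2 * (∫ x, u x ∂μ) + 4 * ∫ x, v x ∂μ) / 3 := by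
    rw [integral_div, integral_add (hu.const_mul 2) (hv.const_mul 4), integral_const_mul,
      integral_const_mul]
  have hd : Integrable (fun x => |u x - v x|) μ := (hu.sub hv).abs
  have hCS := sq_integral_le_integral_mul_integral hd hint hw hE0
    (ae_of_all _ fun x => by linarith [hu0 x, hv0 x]) <| hpos.mono fun x hx => by
      have := three_mul_sub_sq_le_mul_log_div_sub_sub (hu0 x) (hv0 x) hx
      rw [sq_abs]
      linarith
  rw [hw_int] at hCS
  calc 3 / (2 * (∫ x, u x ∂μ) + 4 * ∫ x, v x ∂μ) * (∫ x, |u x - v x| ∂μ) ^ 2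
      = (∫ x, |u x - v x| ∂μ) ^ 2 / ((2 * (∫ x, u x ∂μ) + 4 * ∫ x, v x ∂μ) / 3) := by
        rw [div_mul_eq_mul_div, div_div_eq_mul_div, mul_comm]
    _ ≤ ∫ x, (u x * log (u x / v x) - (u x - v x)) ∂μ :=
      div_le_of_le_mul₀ (by positivity) (integral_nonneg_of_ae hE0) hCS
end

section
/- Let k₊, k₋, k_{p+}, k_{p-}, M₁, M₂ > 0. Then there exists a unique quadruple (n_S, n_E, n_C, n_P) of strictly positive real numbers satisfying n_E + n_C = M₁, n_S + n_C + n_P = M₂, k₋ n_C = k₊ n_S n_E, and k_{p+} n_C = k_{p-} n_P n_E. Moreover n_C = ((M + K) - √((M + K)² - 4M₁M₂))/2 with M = M₁ + M₂ and K = k₋/k₊ + k_{p+}/k_{p-}, and n_E = M₁ - n_C, n_S = k₋ n_C/(k₊ n_E), n_P = k_{p+} n_C/(k_{p-} n_E). -/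
/-!
Eliminating `e = M₁ - c` and the detailed balance conditions `s = (k₋/k₊) c/e`,
`p = (k_{p+}/k_{p-}) c/e` turns the second conservation law into the quadratic
`(M₁ - c)(M₂ - c) = K c` for the complex, and a positive solution of the system is the same as a
root `c` of it with `0 < c < M₁`. The smaller root is such a root, since the discriminant is
`(M₂ - M₁ + K)² + 4 M₁ K`. Every such root also satisfies `c < M₂`, so two of them sum to less
than `M₁ + M₂`, whereas the two roots of the quadratic sum to `M₁ + M₂ + K`.
-/

open Real

noncomputable def smallerRoot (M₁ M₂ K : ℝ) : ℝ :=
  (M₁ + M₂ + K - √((M₁ + M₂ + K) ^ 2 - 4 * M₁ * M₂)) / 2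

section SmallerRoot

variable {M₁ M₂ K : ℝ}

theorem smallerRoot_mul_eq (hM₁ : 0 ≤ M₁) (hK : 0 ≤ K) :
    (M₁ - smallerRoot M₁ M₂ K) * (M₂ - smallerRoot M₁ M₂ K) = K * smallerRoot M₁ M₂ K := by
  have hdisc : 0 ≤ (M₁ + M₂ + K) ^ 2 - 4 * M₁ * M₂ := by
    nlinarith [sq_nonneg (M₂ - M₁ + K), mul_nonneg hM₁ hK]
  unfold smallerRoot
  linear_combination (1 / 4 : ℝ) * sq_sqrt hdisc

theorem smallerRoot_pos (hM₁ : 0 < M₁) (hM₂ : 0 < M₂) (hK : 0 ≤ K) :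
    0 < smallerRoot M₁ M₂ K := by
  have : √((M₁ + M₂ + K) ^ 2 - 4 * M₁ * M₂) < M₁ + M₂ + K :=
    (sqrt_lt' (by positivity)).2 (by nlinarith [mul_pos hM₁ hM₂])
  unfold smallerRoot
  linarith

theorem smallerRoot_lt_left (hM₁ : 0 < M₁) (hK : 0 < K) : smallerRoot M₁ M₂ K < M₁ := by
  have : M₂ - M₁ + K < √((M₁ + M₂ + K) ^ 2 - 4 * M₁ * M₂) :=
    lt_sqrt_of_sq_lt (by nlinarith [mul_pos hM₁ hK])
  unfold smallerRoot
  linarith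

theorem lt_right_of_mul_eq {c : ℝ} (hK : 0 < K) (hc : 0 < c) (hcM₁ : c < M₁)
    (hroot : (M₁ - c) * (M₂ - c) = K * c) : c < M₂ :=
  sub_pos.1 <| pos_of_mul_pos_right (hroot ▸ mul_pos hK hc) (sub_pos.2 hcM₁).le

theorem eq_smallerRoot {c : ℝ} (hM₁ : 0 < M₁) (hK : 0 < K) (hc : 0 < c) (hcM₁ : c < M₁)
    (hroot : (M₁ - c) * (M₂ - c) = K * c) : c = smallerRoot M₁ M₂ K := by
  set r := smallerRoot M₁ M₂ K
  have hrM₁ : r < M₁ := smallerRoot_lt_left hM₁ hK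
  have hcM₂ : c < M₂ := lt_right_of_mul_eq hK hc hcM₁ hroot
  have hfactor : (c - r) * (c + r - (M₁ + M₂ + K)) = 0 := by
    linear_combination hroot - smallerRoot_mul_eq hM₁.le hK.le
  have hsum : c + r - (M₁ + M₂ + K) ≠ 0 := by linarith
  exact sub_eq_zero.1 ((mul_eq_zero.1 hfactor).resolve_right hsum)

end SmallerRoot

def IsDetailedBalanceEquilibrium (kp km kpp kpm M₁ M₂ s e c p : ℝ) : Prop :=
  0 < s ∧ 0 < e ∧ 0 < c ∧ 0 < p ∧ e + c = M₁ ∧ s + c + p = M₂ ∧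
    km * c = kp * s * e ∧ kpp * c = kpm * p * e

theorem isDetailedBalanceEquilibrium_iff {kp km kpp kpm M₁ M₂ s e c p : ℝ} (hkp : 0 < kp)
    (hkm : 0 < km) (hkpp : 0 < kpp) (hkpm : 0 < kpm) :
    IsDetailedBalanceEquilibrium kp km kpp kpm M₁ M₂ s e c p ↔
      (0 < c ∧ c < M₁ ∧ (M₁ - c) * (M₂ - c) = (km / kp + kpp / kpm) * c) ∧
        e = M₁ - c ∧ s = km * c / (kp * e) ∧ p = kpp * c / (kpm * e) := by
  constructor
  · rintro ⟨-, he, hc, -, hE, hS, hbalS, hbalP⟩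
    obtain rfl : e = M₁ - c := by linarith
    refine ⟨⟨hc, by linarith, ?_⟩, rfl, ?_, ?_⟩
    · field_simp
      linear_combination -kp * kpm * (M₁ - c) * hS - kpm * hbalS - kp * hbalP
    · rw [eq_div_iff (by positivity)]
      linear_combination -hbalS
    · rw [eq_div_iff (by positivity)]
      linear_combination -hbalP
  · rintro ⟨⟨hc, hcM₁, hroot⟩, rfl, rfl, rfl⟩
    have he : 0 < M₁ - c := sub_pos.2 hcM₁
    refine ⟨by positivity, he, hc, by positivity, by ring, ?_, by field_simp, by field_simp⟩
    field_simp at hroot ⊢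
    linear_combination -hroot

theorem stmt_8 (kp km kpp kpm M₁ M₂ : ℝ) (hkp : 0 < kp) (hkm : 0 < km)
    (hkpp : 0 < kpp) (hkpm : 0 < kpm) (hM₁ : 0 < M₁) (hM₂ : 0 < M₂) :
    let M := M₁ + M₂
    let K := km / kp + kpp / kpm
    let nC := ((M + K) - Real.sqrt ((M + K) ^ 2 - 4 * M₁ * M₂)) / 2
    let nE := M₁ - nC
    let nS := km * nC / (kp * nE)
    let nP := kpp * nC / (kpm * nE)
    (0 < nS ∧ 0 < nE ∧ 0 < nC ∧ 0 < nP ∧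
      nE + nC = M₁ ∧ nS + nC + nP = M₂ ∧
      km * nC = kp * nS * nE ∧ kpp * nC = kpm * nP * nE) ∧
    ∀ s e c p : ℝ, 0 < s → 0 < e → 0 < c → 0 < p →
      e + c = M₁ → s + c + p = M₂ →
      km * c = kp * s * e → kpp * c = kpm * p * e →
      s = nS ∧ e = nE ∧ c = nC ∧ p = nP := by
  intro M K nC nE nS nP
  have hK : 0 < K := by positivity
  have hroot : 0 < nC ∧ nC < M₁ ∧ (M₁ - nC) * (M₂ - nC) = K * nC :=
    ⟨smallerRoot_pos hM₁ hM₂ hK.le, smallerRoot_lt_left hM₁ hK, smallerRoot_mul_eq hM₁.le hK.le⟩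
  refine ⟨(isDetailedBalanceEquilibrium_iff hkp hkm hkpp hkpm).2 ⟨hroot, rfl, rfl, rfl⟩, ?_⟩
  intro s e c p hs he hc hp hE hS hbalS hbalP
  obtain ⟨⟨-, hcM₁, hcroot⟩, rfl, rfl, rfl⟩ :=
    (isDetailedBalanceEquilibrium_iff hkp hkm hkpp hkpm).1 ⟨hs, he, hc, hp, hE, hS, hbalS, hbalP⟩
  obtain rfl : c = nC := eq_smallerRoot hM₁ hK hc hcM₁ hcroot
  exact ⟨rfl, rfl, rfl, rfl⟩
end

section
/- Let Ω ⊂ ℝ^d be measurable with |Ω| = 1 and u, v : Ω → [0, ∞) integrable with √u, √v ∈ H¹(Ω). Then (√(∫u) - √(∫v))² ≤ (∫√u - ∫√v)² + (1/P(Ω)) (‖∇√u‖²_{L²} + ‖∇√v‖²_{L²}) + ‖√v - ∫√v‖²_{L²}, where P(Ω) is the Poincaré constant (first nonzero Neumann eigenvalue of -Δ on Ω). -/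
/-!
On a probability space, `∫ u = (∫ √u)² + ‖√u - ∫ √u‖²` (the variance identity for `√u`). Hence
`√(∫ u)` is the Euclidean norm of the vector `(∫ √u, ‖√u - ∫ √u‖)`, and the reverse triangle
inequality bounds `(√(∫ u) - √(∫ v))²` by `(∫ √u - ∫ √v)²` plus the two fluctuations. The
Poincaré–Wirtinger inequality then trades the fluctuation of `√u` for its Dirichlet energy.
-/

open MeasureTheory Real

section

variable {α : Type*} [MeasurableSpace α] {μ : Measure α}

theorem memLp_two_sqrt {u : α → ℝ} (hu : Integrable u μ) (hu0 : 0 ≤ᵐ[μ] u) :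
    MemLp (fun x => √(u x)) 2 μ := by
  refine (memLp_two_iff_integrable_sq
    (continuous_sqrt.comp_aestronglyMeasurable hu.aestronglyMeasurable)).2 (hu.congr ?_)
  filter_upwards [hu0] with x hx using (sq_sqrt hx).symm

theorem integral_sq_eq_sq_integral_add_integral_sub_sq [IsProbabilityMeasure μ] {f : α → ℝ}
    (hf : MemLp f 2 μ) :
    ∫ x, f x ^ 2 ∂μ = (∫ x, f x ∂μ) ^ 2 + ∫ x, (f x - ∫ y, f y ∂μ) ^ 2 ∂μ := by
  have h := (ProbabilityTheory.variance_eq_integral hf.aemeasurable).symm.trans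
    (ProbabilityTheory.variance_eq_sub hf)
  simp only [Pi.pow_apply] at h
  linarith

theorem integral_eq_sq_integral_sqrt_add [IsProbabilityMeasure μ] {u : α → ℝ}
    (hu : Integrable u μ) (hu0 : 0 ≤ᵐ[μ] u) :
    ∫ x, u x ∂μ = (∫ x, √(u x) ∂μ) ^ 2 + ∫ x, (√(u x) - ∫ y, √(u y) ∂μ) ^ 2 ∂μ := by
  rw [← integral_sq_eq_sq_integral_add_integral_sub_sq (memLp_two_sqrt hu hu0)]
  refine integral_congr_ae ?_
  filter_upwards [hu0] with x hx using (sq_sqrt hx).symm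

end

theorem sq_sqrt_add_sub_sqrt_add_le {a b s t : ℝ} (ha : 0 ≤ a) (hb : 0 ≤ b) (hs : 0 ≤ s)
    (ht : 0 ≤ t) : (√(a ^ 2 + s) - √(b ^ 2 + t)) ^ 2 ≤ (a - b) ^ 2 + s + t := by
  have hA : 0 ≤ a ^ 2 + s := by positivity
  have hB : 0 ≤ b ^ 2 + t := by positivity
  have hab : a * b ≤ √(a ^ 2 + s) * √(b ^ 2 + t) := by
    rw [← sqrt_mul hA, ← sqrt_sq (mul_nonneg ha hb)]
    exact sqrt_le_sqrt (by nlinarith)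
  nlinarith [sq_sqrt hA, sq_sqrt hB]

theorem sq_sqrt_integral_sub_sqrt_integral_le {α : Type*} [MeasurableSpace α] {μ : Measure α}
    [IsProbabilityMeasure μ] {u v : α → ℝ} (hu : Integrable u μ) (hv : Integrable v μ)
    (hu0 : 0 ≤ᵐ[μ] u) (hv0 : 0 ≤ᵐ[μ] v) :
    (√(∫ x, u x ∂μ) - √(∫ x, v x ∂μ)) ^ 2 ≤
      (∫ x, √(u x) ∂μ - ∫ x, √(v x) ∂μ) ^ 2 +
        ∫ x, (√(u x) - ∫ y, √(u y) ∂μ) ^ 2 ∂μ + ∫ x, (√(v x) - ∫ y, √(v y) ∂μ) ^ 2 ∂μ := by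
  rw [integral_eq_sq_integral_sqrt_add hu hu0, integral_eq_sq_integral_sqrt_add hv hv0]
  exact sq_sqrt_add_sub_sqrt_add_le (integral_nonneg fun _ => sqrt_nonneg _)
    (integral_nonneg fun _ => sqrt_nonneg _) (integral_nonneg fun _ => sq_nonneg _)
    (integral_nonneg fun _ => sq_nonneg _)

/-- `P` plays the role of the Poincaré constant of `Ω`, encoded by the Poincaré–Wirtinger
inequality `hPW`. -/
theorem stmt_19_general {d : ℕ} (Ω : Set (EuclideanSpace ℝ (Fin d))) (hΩ : MeasurableSet Ω)
    (hvol : volume Ω = 1) (u v : EuclideanSpace ℝ (Fin d) → ℝ)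
    (hu : IntegrableOn u Ω) (hv : IntegrableOn v Ω)
    (hu0 : ∀ x ∈ Ω, 0 ≤ u x) (hv0 : ∀ x ∈ Ω, 0 ≤ v x)
    (hsqu : IntegrableOn (fun x => ‖fderiv ℝ (fun y => Real.sqrt (u y)) x‖ ^ 2) Ω)
    (hdu : ∀ x ∈ Ω, DifferentiableAt ℝ (fun y => Real.sqrt (u y)) x)
    (P : ℝ) (hP : 0 < P)
    (hPW : ∀ w : EuclideanSpace ℝ (Fin d) → ℝ, IntegrableOn w Ω →
      IntegrableOn (fun x => (w x - ∫ y in Ω, w y) ^ 2) Ω →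
      IntegrableOn (fun x => ‖fderiv ℝ w x‖ ^ 2) Ω →
      (∀ x ∈ Ω, DifferentiableAt ℝ w x) →
      P * ∫ x in Ω, (w x - ∫ y in Ω, w y) ^ 2 ≤ ∫ x in Ω, ‖fderiv ℝ w x‖ ^ 2) :
    (Real.sqrt (∫ x in Ω, u x) - Real.sqrt (∫ x in Ω, v x)) ^ 2 ≤
      ((∫ x in Ω, Real.sqrt (u x)) - ∫ x in Ω, Real.sqrt (v x)) ^ 2 +
      (1 / P) * ((∫ x in Ω, ‖fderiv ℝ (fun y => Real.sqrt (u y)) x‖ ^ 2) +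
        ∫ x in Ω, ‖fderiv ℝ (fun y => Real.sqrt (v y)) x‖ ^ 2) +
      ∫ x in Ω, (Real.sqrt (v x) - ∫ y in Ω, Real.sqrt (v y)) ^ 2 := by
  have : IsProbabilityMeasure (volume.restrict Ω) := ⟨by rw [Measure.restrict_apply_univ, hvol]⟩
  have hu0' : 0 ≤ᵐ[volume.restrict Ω] u := ae_restrict_of_forall_mem hΩ hu0
  have hv0' : 0 ≤ᵐ[volume.restrict Ω] v := ae_restrict_of_forall_mem hΩ hv0
  have hsqrt_u := memLp_two_sqrt hu hu0'
  have hpoincare_u := hPW _ (hsqrt_u.integrable one_le_two)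
    (hsqrt_u.sub (memLp_const _)).integrable_sq hsqu hdu
  have hfluct_u : ∫ x in Ω, (√(u x) - ∫ y in Ω, √(u y)) ^ 2 ≤
      (1 / P) * ∫ x in Ω, ‖fderiv ℝ (fun y => √(u y)) x‖ ^ 2 := by
    rw [one_div_mul_eq_div, le_div_iff₀ hP]
    linarith
  have henergy_v : 0 ≤ (1 / P) * ∫ x in Ω, ‖fderiv ℝ (fun y => √(v y)) x‖ ^ 2 :=
    mul_nonneg (one_div_pos.2 hP).le (integral_nonneg fun _ => sq_nonneg _)
  have := sq_sqrt_integral_sub_sqrt_integral_le hu hv hu0' hv0'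
  rw [mul_add]
  linarith

/-- Lemma 3.4 combined with the Poincaré–Wirtinger inequality. `P` plays the role of
the Poincaré constant of `Ω` (first nonzero Neumann eigenvalue of `-Δ`), encoded via
the hypothesis `hPW` that the Poincaré–Wirtinger inequality holds with constant `P`. -/
theorem stmt_19 {d : ℕ} (Ω : Set (EuclideanSpace ℝ (Fin d))) (hΩ : MeasurableSet Ω)
    (hvol : volume Ω = 1) (u v : EuclideanSpace ℝ (Fin d) → ℝ)
    (hu : IntegrableOn u Ω) (hv : IntegrableOn v Ω)
    (hu0 : ∀ x ∈ Ω, 0 ≤ u x) (hv0 : ∀ x ∈ Ω, 0 ≤ v x)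
    (hsqu : IntegrableOn (fun x => ‖fderiv ℝ (fun y => Real.sqrt (u y)) x‖ ^ 2) Ω)
    (hsqv : IntegrableOn (fun x => ‖fderiv ℝ (fun y => Real.sqrt (v y)) x‖ ^ 2) Ω)
    (hdu : ∀ x ∈ Ω, DifferentiableAt ℝ (fun y => Real.sqrt (u y)) x)
    (hdv : ∀ x ∈ Ω, DifferentiableAt ℝ (fun y => Real.sqrt (v y)) x)
    (P : ℝ) (hP : 0 < P)
    (hPW : ∀ w : EuclideanSpace ℝ (Fin d) → ℝ, IntegrableOn w Ω →
      IntegrableOn (fun x => (w x - ∫ y in Ω, w y) ^ 2) Ω →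
      IntegrableOn (fun x => ‖fderiv ℝ w x‖ ^ 2) Ω →
      (∀ x ∈ Ω, DifferentiableAt ℝ w x) →
      P * ∫ x in Ω, (w x - ∫ y in Ω, w y) ^ 2 ≤ ∫ x in Ω, ‖fderiv ℝ w x‖ ^ 2) :
    (Real.sqrt (∫ x in Ω, u x) - Real.sqrt (∫ x in Ω, v x)) ^ 2 ≤
      ((∫ x in Ω, Real.sqrt (u x)) - ∫ x in Ω, Real.sqrt (v x)) ^ 2 +
      (1 / P) * ((∫ x in Ω, ‖fderiv ℝ (fun y => Real.sqrt (u y)) x‖ ^ 2) +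
        ∫ x in Ω, ‖fderiv ℝ (fun y => Real.sqrt (v y)) x‖ ^ 2) +
      ∫ x in Ω, (Real.sqrt (v x) - ∫ y in Ω, Real.sqrt (v y)) ^ 2 :=
  stmt_19_general Ω hΩ hvol u v hu hv hu0 hv0 hsqu hdu P hP hPW
end
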